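/- arXiv:2112.13281 — 4 statements merged into one kernel-verified Lean document; each statement's English description precedes it below -/
import Mathlib

section
/- For n ≥ 1 and the powerset Boolean algebra B of an m-element set, the number of (n+1)-tuples z = (z₁,...,z_{n+1}) of subsets such that (z₁ ∩ ... ∩ z_k) ∪ z_{k+1} = {0,...,m-1} for every 1 ≤ k ≤ n, and such that z₁ ∩ ... ∩ z_{n+1} has exactly p elements, is (m choose p)·(n+1)^(m−p). -/
/-- A snapshot for `C_n` over a Boolean algebra `B`: a tuple `z ∈ B^(n+1)` such that
`(⋀_{i=1}^k z_i) ∨ z_{k+1} = 1` for every `1 ≤ k ≤ n` (coordinates are 0-indexed here). -/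
def IsSnapshot {B : Type*} [BooleanAlgebra B] (n : ℕ) (z : Fin (n + 1) → B) : Prop :=
  ∀ k : Fin (n + 1), 1 ≤ (k : ℕ) → (Finset.Iio k).inf z ⊔ z k = ⊤

open Finset

/-- For a snapshot over a powerset algebra, each point is missing from at most one coordinate. -/
lemma snap_unique {m n : ℕ} {z : Fin (n + 1) → Finset (Fin m)} (hz : IsSnapshot n z)
    {x : Fin m} {i j : Fin (n + 1)} (hi : x ∉ z i) (hj : x ∉ z j) : i = j := by
  by_contra hne
  wlog h : i < j generalizing i j
  · exact this hj hi (Ne.symm hne) (lt_of_le_of_ne (not_lt.mp h) (Ne.symm hne))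
  have hk : 1 ≤ (j : ℕ) := by
    have : (i : ℕ) < (j : ℕ) := h
    omega
  have htop := hz j hk
  have hx : x ∈ (Finset.Iio j).inf z ⊔ z j := by
    rw [htop]; exact mem_univ x
  rw [Finset.sup_eq_union, Finset.mem_union] at hx
  rcases hx with hx | hx
  · rw [Finset.mem_inf] at hx
    exact hi (hx i (Finset.mem_Iio.mpr h))
  · exact hj hx

/-- Converse: if each point is missing from at most one coordinate, it's a snapshot. -/
lemma snap_of_unique {m n : ℕ} {z : Fin (n + 1) → Finset (Fin m)}
    (h : ∀ (x : Fin m) (i j : Fin (n + 1)), x ∉ z i → x ∉ z j → i = j) :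
    IsSnapshot n z := by
  intro k hk
  rw [Finset.sup_eq_union]
  apply Finset.eq_univ_of_forall
  intro x
  rw [Finset.mem_union]
  by_cases hxk : x ∈ z k
  · exact Or.inr hxk
  · left
    rw [Finset.mem_inf]
    intro i hi
    by_contra hxi
    have := h x i k hxi hxk
    rw [this] at hi
    exact absurd hi (by simp)

theorem stmt3 (m n p : ℕ) (hn : 1 ≤ n) (hp : p ≤ m) :
    Nat.card {z : Fin (n + 1) → Finset (Fin m) //
        IsSnapshot n z ∧ (Finset.univ.inf z).card = p} =
      m.choose p * (n + 1) ^ (m - p) := by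
  classical
  -- the map from the structured data to snapshots
  set F : (Σ s : {s : Finset (Fin m) // s.card = p}, ({x : Fin m // x ∉ s.1} → Fin (n + 1))) →
      {z : Fin (n + 1) → Finset (Fin m) // IsSnapshot n z ∧ (Finset.univ.inf z).card = p} :=
    fun sg =>
      ⟨fun i => Finset.univ.filter (fun x =>
          if h : x ∈ sg.1.1 then True else sg.2 ⟨x, h⟩ ≠ i), by
        have hmem : ∀ (x : Fin m) (i : Fin (n + 1)),
            (x ∈ Finset.univ.filter (fun x =>
              if h : x ∈ sg.1.1 then True else sg.2 ⟨x, h⟩ ≠ i)) ↔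
            (x ∈ sg.1.1 ∨ ∀ h : x ∉ sg.1.1, sg.2 ⟨x, h⟩ ≠ i) := by
          intro x i
          simp only [Finset.mem_filter, Finset.mem_univ, true_and]
          by_cases h : x ∈ sg.1.1 <;> simp [h]
        constructor
        · apply snap_of_unique
          intro x i j hi hj
          rw [hmem] at hi hj
          push_neg at hi hj
          obtain ⟨hxs, h1, hgi⟩ := hi
          obtain ⟨-, h2, hgj⟩ := hj
          rw [← hgi, ← hgj]
        · have hinf : Finset.univ.inf (fun i => Finset.univ.filter (fun x =>
              if h : x ∈ sg.1.1 then True else sg.2 ⟨x, h⟩ ≠ i)) = sg.1.1 := by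
            ext x
            rw [Finset.mem_inf]
            constructor
            · intro hx
              by_contra hxs
              have := (hmem x (sg.2 ⟨x, hxs⟩)).mp (hx _ (mem_univ _))
              rcases this with h | h
              · exact hxs h
              · exact h hxs rfl
            · intro hxs i _
              exact (hmem x i).mpr (Or.inl hxs)
          rw [hinf]
          exact sg.1.2⟩
  have hF : Function.Bijective F := by
    constructor
    · rintro ⟨⟨s, hs⟩, g⟩ ⟨⟨s', hs'⟩, g'⟩ hEq
      have hz := congrArg Subtype.val hEq
      simp only [F] at hz
      -- membership characterization
      have hmem : ∀ (x : Fin m) (i : Fin (n + 1)),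
          (x ∈ Finset.univ.filter (fun x => if h : x ∈ s then True else g ⟨x, h⟩ ≠ i)) ↔
          (x ∈ s ∨ ∀ h : x ∉ s, g ⟨x, h⟩ ≠ i) := by
        intro x i
        simp only [Finset.mem_filter, Finset.mem_univ, true_and]
        by_cases h : x ∈ s <;> simp [h]
      have hmem' : ∀ (x : Fin m) (i : Fin (n + 1)),
          (x ∈ Finset.univ.filter (fun x => if h : x ∈ s' then True else g' ⟨x, h⟩ ≠ i)) ↔
          (x ∈ s' ∨ ∀ h : x ∉ s', g' ⟨x, h⟩ ≠ i) := by
        intro x i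
        simp only [Finset.mem_filter, Finset.mem_univ, true_and]
        by_cases h : x ∈ s' <;> simp [h]
      have hmemiff : ∀ (x : Fin m) (i : Fin (n + 1)),
          (x ∈ s ∨ ∀ h : x ∉ s, g ⟨x, h⟩ ≠ i) ↔ (x ∈ s' ∨ ∀ h : x ∉ s', g' ⟨x, h⟩ ≠ i) := by
        intro x i
        rw [← hmem, ← hmem']
        exact Iff.of_eq (congrArg (x ∈ ·) (congrFun hz i))
      have hss : s = s' := by
        ext x
        constructor
        · intro hx
          by_contra hx'
          have := (hmemiff x (g' ⟨x, hx'⟩)).mp (Or.inl hx)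
          rcases this with h | h
          · exact hx' h
          · exact h hx' rfl
        · intro hx
          by_contra hx'
          have := (hmemiff x (g ⟨x, hx'⟩)).mpr (Or.inl hx)
          rcases this with h | h
          · exact hx' h
          · exact h hx' rfl
      subst hss
      have hgg : g = g' := by
        funext x
        obtain ⟨x, hx⟩ := x
        by_contra hne
        have := (hmemiff x (g ⟨x, hx⟩)).mpr
        have h2 : ¬ (x ∈ s ∨ ∀ h : x ∉ s, g ⟨x, h⟩ ≠ g ⟨x, hx⟩) := by
          push_neg
          exact ⟨hx, ⟨hx, rfl⟩⟩
        have h3 : (x ∈ s ∨ ∀ h : x ∉ s, g' ⟨x, h⟩ ≠ g ⟨x, hx⟩) := by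
          right
          intro h hcontra
          exact hne hcontra.symm
        exact h2 (this h3)
      simp [hgg]
    · rintro ⟨z, hz, hcard⟩
      have huniq : ∀ x : Fin m, x ∉ Finset.univ.inf z → ∃! i, x ∉ z i := by
        intro x hx
        rw [Finset.mem_inf] at hx
        push_neg at hx
        obtain ⟨i, _, hi⟩ := hx
        exact ⟨i, hi, fun j hj => snap_unique hz hj hi⟩
      refine ⟨⟨⟨Finset.univ.inf z, hcard⟩, fun x => Fintype.choose _ (huniq x.1 x.2)⟩, ?_⟩
      apply Subtype.ext
      simp only [F]
      funext i
      ext x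
      simp only [Finset.mem_filter, Finset.mem_univ, true_and]
      by_cases hxs : x ∈ Finset.univ.inf z
      · simp only [hxs, dite_true, true_iff]
        rw [Finset.mem_inf] at hxs
        exact hxs i (mem_univ i)
      · simp only [hxs, dite_false]
        have hspec := Fintype.choose_spec (fun i => x ∉ z i) (huniq x hxs)
        constructor
        · intro hne
          by_contra hxi
          exact hne (snap_unique hz hspec hxi)
        · intro hxi heq
          rw [heq] at hspec
          exact hspec hxi
  rw [← Nat.card_congr (Equiv.ofBijective F hF)]
  rw [Nat.card_eq_fintype_card, Fintype.card_sigma]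
  have hfiber : ∀ s : {s : Finset (Fin m) // s.card = p},
      Fintype.card ({x : Fin m // x ∉ s.1} → Fin (n + 1)) = (n + 1) ^ (m - p) := by
    intro s
    rw [Fintype.card_fun, Fintype.card_fin]
    congr 1
    have : Fintype.card {x : Fin m // x ∉ s.1} = Fintype.card (Fin m) - Fintype.card {x : Fin m // x ∈ s.1} :=
      Fintype.card_subtype_compl _
    rw [this, Fintype.card_fin]
    congr 1
    simp only [Fintype.card_coe]
    exact s.2
  rw [Finset.sum_congr rfl (fun s _ => hfiber s), Finset.sum_const, Finset.card_univ,
    Fintype.card_finset_len, Fintype.card_fin, smul_eq_mul]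
end

section
/- For n ≥ 1 and the powerset Boolean algebra B of an m-element set, the set D_n^B of designated snapshots (snapshots z with z₁ = 1) has exactly (n+1)^m elements. -/
/-- For a designated snapshot, at most one coordinate misses a given point,
and coordinate 0 never does. -/
lemma snapshot_unique {m n : ℕ} {z : Fin (n + 1) → Finset (Fin m)}
    (hz : IsSnapshot n z) {x : Fin m} {j k : Fin (n + 1)} (hjk : j < k)
    (hj : x ∉ z j) : x ∈ z k := by
  by_contra hk
  have h1 : 1 ≤ (k : ℕ) := Nat.one_le_iff_ne_zero.2 (by
    intro h0
    exact absurd (Fin.lt_iff_val_lt_val.1 hjk) (by omega))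
  have := hz k h1
  have hx : x ∈ (Finset.Iio k).inf z ⊔ z k := this ▸ Finset.mem_univ x
  rcases Finset.mem_union.1 hx with h | h
  · exact hj (Finset.mem_inf.1 h j (Finset.mem_Iio.2 hjk))
  · exact hk h

noncomputable def toFun {m n : ℕ} (g : Fin m → Fin (n + 1)) :
    Fin (n + 1) → Finset (Fin m) :=
  fun k => Finset.univ.filter (fun x => g x = k → k = 0)

lemma mem_toFun {m n : ℕ} (g : Fin m → Fin (n + 1)) (k : Fin (n + 1)) (x : Fin m) :
    x ∈ toFun g k ↔ (g x = k → k = 0) := by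
  simp [toFun]

theorem stmt5 (m n : ℕ) (hn : 1 ≤ n) :
    Nat.card {z : Fin (n + 1) → Finset (Fin m) //
        IsSnapshot n z ∧ z 0 = ⊤} = (n + 1) ^ m := by
  have hb : Function.Bijective
      (fun g : Fin m → Fin (n + 1) =>
        (⟨toFun g, by
          intro k hk
          ext x
          simp only [Finset.mem_union, Finset.mem_univ, iff_true, Finset.sup_eq_union,
            Finset.top_eq_univ]
          by_cases hgx : x ∈ toFun g k
          · right; exact hgx
          · left
            rw [mem_toFun] at hgx
            push_neg at hgx
            refine Finset.mem_inf.2 fun i hi => ?_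
            rw [mem_toFun]
            intro hgi
            exact absurd (hgi.symm.trans hgx.1) (by
              intro h; rw [h] at hi; exact absurd (Finset.mem_Iio.1 hi) (lt_irrefl _)), by
          ext x
          simp [mem_toFun]⟩ :
        {z : Fin (n + 1) → Finset (Fin m) // IsSnapshot n z ∧ z 0 = ⊤})) := by
    constructor
    · intro g g' h
      have h' : toFun g = toFun g' := congrArg Subtype.val h
      funext x
      by_cases hg : g x = 0
      · by_cases hg' : g' x = 0
        · rw [hg, hg']
        · have hthis : x ∉ toFun g' (g' x) := by
            rw [mem_toFun]; simp [hg']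
          rw [← h', mem_toFun] at hthis
          push_neg at hthis
          exact hthis.1
      · have : x ∉ toFun g (g x) := by rw [mem_toFun]; simp [hg]
        rw [h', mem_toFun] at this
        push_neg at this
        exact this.1.symm
    · rintro ⟨z, hz, hz0⟩
      classical
      refine ⟨fun x => if h : ∃ k, x ∉ z k then h.choose else 0, ?_⟩
      ext k x
      rw [mem_toFun]
      by_cases h : ∃ k, x ∉ z k
      · simp only [dif_pos h]
        have hc := h.choose_spec
        have hc0 : h.choose ≠ 0 := by
          intro h0; rw [h0, hz0] at hc; exact hc (Finset.mem_univ x)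
        constructor
        · intro himp
          by_contra hxk
          rcases lt_trichotomy h.choose k with hlt | heq | hgt
          · exact hxk (snapshot_unique hz hlt hc)
          · exact hc0 (heq ▸ himp heq)
          · exact hc (snapshot_unique hz hgt hxk)
        · intro hmem heq
          exact absurd hmem (heq ▸ hc)
      · push_neg at h
        have hne : ¬∃ k, x ∉ z k := fun ⟨k, hk⟩ => hk (h k)
        simp only [dif_neg hne]
        exact iff_of_true (fun h0 => h0.symm) (h k)
  rw [← Nat.card_eq_of_bijective _ hb]
  simp [Nat.card_eq_fintype_card]
end

section
/- For n ≥ 1 and the powerset Boolean algebra B of an m-element set, the set Boo_n^B of Boolean snapshots (snapshots z with z₁ ∧ z₂ = 0) has exactly 2^m elements. -/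
theorem Fin.Iio_one_eq_singleton_zero {n : ℕ} : Finset.Iio (1 : Fin (n + 2)) = {0} := by
  ext i
  simp [Fin.lt_one_iff]

theorem Fin.inf_Iio_succ_succ_le {α : Type*} [SemilatticeInf α] [OrderTop α] {n : ℕ}
    (z : Fin (n + 2) → α) (j : Fin n) : (Finset.Iio j.succ.succ).inf z ≤ z 0 ⊓ z 1 :=
  le_inf (Finset.inf_le (by simp [Fin.lt_def])) (Finset.inf_le (by simp [Fin.lt_def]))

namespace IsSnapshot

variable {B : Type*} [BooleanAlgebra B] {n : ℕ}

def boolean (n : ℕ) (a : B) : Fin (n + 2) → B :=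
  Fin.cons a (Fin.cons aᶜ fun _ => ⊤)

@[simp]
theorem boolean_zero (a : B) : boolean n a 0 = a := rfl

@[simp]
theorem boolean_one (a : B) : boolean n a 1 = aᶜ := rfl

@[simp]
theorem boolean_succ_succ (a : B) (j : Fin n) : boolean n a j.succ.succ = ⊤ := rfl

theorem boolean_isSnapshot (a : B) : IsSnapshot (n + 1) (boolean n a) := by
  intro k hk
  induction k using Fin.cases with
  | zero => simp at hk
  | succ k =>
    induction k using Fin.cases with
    | zero => simp [Fin.Iio_one_eq_singleton_zero]
    | succ j => simp

theorem eq_boolean {z : Fin (n + 2) → B} (hz : IsSnapshot (n + 1) z) (hdisj : z 0 ⊓ z 1 = ⊥) :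
    z = boolean n (z 0) := by
  have hcompl : IsCompl (z 0) (z 1) := by
    refine ⟨disjoint_iff.mpr hdisj, codisjoint_iff.mpr ?_⟩
    simpa [Fin.Iio_one_eq_singleton_zero] using hz 1 (by simp)
  funext k
  induction k using Fin.cases with
  | zero => rfl
  | succ k =>
    induction k using Fin.cases with
    | zero => exact hcompl.compl_eq.symm
    | succ j =>
      have hinf : (Finset.Iio j.succ.succ).inf z = ⊥ :=
        le_bot_iff.mp (hdisj ▸ Fin.inf_Iio_succ_succ_le z j)
      simpa [hinf] using hz j.succ.succ (by simp)

def booleanEquiv (n : ℕ) (B : Type*) [BooleanAlgebra B] :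
    {z : Fin (n + 2) → B // IsSnapshot (n + 1) z ∧ z 0 ⊓ z 1 = ⊥} ≃ B where
  toFun z := z.1 0
  invFun a := ⟨boolean n a, boolean_isSnapshot a, by simp⟩
  left_inv z := Subtype.ext (z.2.1.eq_boolean z.2.2).symm
  right_inv _ := rfl

end IsSnapshot

theorem stmt6 (m n : ℕ) (hn : 1 ≤ n) :
    Nat.card {z : Fin (n + 1) → Finset (Fin m) //
        IsSnapshot n z ∧ z 0 ⊓ z 1 = ⊥} = 2 ^ m := by
  obtain ⟨n, rfl⟩ := Nat.exists_eq_add_of_le' hn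
  rw [Nat.card_congr (IsSnapshot.booleanEquiv n (Finset (Fin m))), Nat.card_eq_fintype_card,
    Fintype.card_finset, Fintype.card_fin]
end

section
/- Let B be a Boolean algebra, z ∈ B^{n+1} a snapshot, and let a = ⋀_{i=3}^{n+1} z_i. Then z₁ ∨ (z₂ ∧ ∼z₁ ∧ a) = 1. -/
theorem stmt10 {B : Type*} [BooleanAlgebra B] (n : ℕ) (hn : 1 ≤ n)
    (z : Fin (n + 1) → B) (hz : IsSnapshot n z) :
    z 0 ⊔ (z 1 ⊓ (z 0)ᶜ ⊓
      (Finset.univ.filter (fun i : Fin (n + 1) => 2 ≤ (i : ℕ))).inf z) = ⊤ := by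
  have h0 : ∀ i : Fin (n + 1), 1 ≤ (i : ℕ) → z 0 ⊔ z i = ⊤ := by
    intro i hi
    refine eq_top_iff.mpr ?_
    rw [← hz i hi]
    refine sup_le_sup_right (Finset.inf_le ?_) _
    simp [Fin.lt_def, Nat.lt_of_lt_of_le Nat.zero_lt_one hi]
  have h1 : z 0 ⊔ z 1 = ⊤ := by
    apply h0
    simp [Fin.le_def, Fin.val_one, Nat.one_le_iff_ne_zero]
    omega
  rw [sup_inf_left, sup_inf_left, h1, sup_compl_eq_top, top_inf_eq, top_inf_eq]
  rw [Finset.inf_sup_distrib_left]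
  rw [Finset.inf_eq_top_iff]
  intro i hi
  simp only [Finset.mem_filter] at hi
  exact h0 i (le_trans (by norm_num) hi.2)
end
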